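/- arXiv:1309.4706 — 2 statements merged into one kernel-verified Lean document; each statement's English description precedes it below -/
import Mathlib

section
/- For any x ∈ (0,2) and any dimension d ≥ 1, the integral ∫_T 1/((1/d)∑_{j=1}^d (cos θ_j + 1) - x)² dθ over the torus T = [-π,π]^d diverges (equals +∞). -/
open MeasureTheory Real Filter Set Topology

def torus (d : ℕ) : Set (Fin d → ℝ) :=
  Set.univ.pi fun _ => Set.Icc (-π) π

noncomputable def gfun (d : ℕ) (θ : Fin d → ℝ) : ℝ :=
  (1 / (d : ℝ)) * ∑ j, (Real.cos (θ j) + 1)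

open scoped ENNReal

/-
Split off the first coordinate: `gfun (n + 1) (Fin.cons a θ) - x = (cos a - c) / (n + 1)` with
`c = levelCos n x θ`. When `c ∈ (-1, 1)`, the function `cos a - c` vanishes at `t = arccos c`
and, cos being 1-Lipschitz, `|cos a - c| ≤ |a - t|`; so the integral in `a` dominates
`∫ (a - t)⁻²`, which is infinite. The set of `θ` in the torus with `c ∈ (-1, 1)` contains a
neighbourhood of the diagonal point `cos θⱼ = x - 1`, hence has positive measure, and Tonelli
finishes the argument.
-/

lemma lintegral_inv_sub_sq_Ioo_eq_top {t b : ℝ} (htb : t < b) :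
    ∫⁻ s in Ioo t b, ENNReal.ofReal (((s - t)⁻¹) ^ 2) = ∞ := by
  refine ENNReal.eq_top_of_forall_nnreal_le fun r ↦ ?_
  set ε := min ((r : ℝ) + 1)⁻¹ (b - t)
  have hε : 0 < ε := lt_min (by positivity) (by linarith)
  have hεb : ε ≤ b - t := min_le_right _ _
  have hrε : (r : ℝ) ≤ ε⁻¹ := by
    have : (r : ℝ) + 1 ≤ ε⁻¹ := le_inv_of_le_inv₀ (by positivity) (min_le_left _ _)
    linarith
  calc (r : ℝ≥0∞) = ENNReal.ofReal r := ENNReal.ofReal_coe_nnreal.symm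
    _ ≤ ENNReal.ofReal ((ε⁻¹) ^ 2 * ε) := by
        refine ENNReal.ofReal_le_ofReal ?_
        rwa [sq, mul_assoc, inv_mul_cancel₀ hε.ne', mul_one]
    _ = ∫⁻ _ in Ioo t (t + ε), ENNReal.ofReal ((ε⁻¹) ^ 2) := by
        rw [setLIntegral_const, volume_Ioo, add_sub_cancel_left,
          ENNReal.ofReal_mul (by positivity)]
    _ ≤ ∫⁻ s in Ioo t (t + ε), ENNReal.ofReal (((s - t)⁻¹) ^ 2) := by
        refine setLIntegral_mono (by fun_prop) fun s hs ↦ ENNReal.ofReal_le_ofReal ?_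
        have hst : 0 < s - t := sub_pos.2 hs.1
        gcongr
        linarith [hs.2]
    _ ≤ _ := lintegral_mono_set (Ioo_subset_Ioo_right (by linarith))

lemma lintegral_inv_cos_sub_sq_eq_top {c : ℝ} (hc : c ∈ Ioo (-1) 1) :
    ∫⁻ a in Icc (-π) π, ENNReal.ofReal (((cos a - c)⁻¹) ^ 2) = ∞ := by
  set t := arccos c
  have ht : t ∈ Ioo 0 π := ⟨arccos_pos.2 hc.2, arccos_lt_pi.2 hc.1⟩
  have hct : cos t = c := cos_arccos hc.1.le hc.2.le
  refine eq_top_mono ?_ (lintegral_inv_sub_sq_Ioo_eq_top ht.2)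
  calc ∫⁻ a in Ioo t π, ENNReal.ofReal (((a - t)⁻¹) ^ 2)
      ≤ ∫⁻ a in Ioo t π, ENNReal.ofReal (((cos a - c)⁻¹) ^ 2) := by
        refine setLIntegral_mono (by fun_prop) fun a ha ↦ ENNReal.ofReal_le_ofReal ?_
        have hat : 0 < a - t := sub_pos.2 ha.1
        have hpos : 0 < c - cos a :=
          hct ▸ sub_pos.2 (cos_lt_cos_of_nonneg_of_le_pi ht.1.le ha.2.le ha.1)
        have hle : c - cos a ≤ a - t := by
          have := abs_cos_sub_cos_le t a
          rwa [hct, abs_of_pos hpos, abs_sub_comm, abs_of_pos hat] at this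
        rw [← neg_sub c, inv_neg, neg_sq]
        gcongr
    _ ≤ _ := lintegral_mono_set
        (Ioo_subset_Icc_self.trans (Icc_subset_Icc (by linarith [ht.1, pi_pos]) le_rfl))

lemma setLIntegral_eq_top_of_subset {α : Type*} [MeasurableSpace α] {μ : Measure α}
    {f : α → ℝ≥0∞} {s t : Set α} (hs : MeasurableSet s) (hst : s ⊆ t) (hμs : μ s ≠ 0)
    (hf : ∀ x ∈ s, f x = ∞) : ∫⁻ x in t, f x ∂μ = ∞ := by
  refine eq_top_mono (lintegral_mono_set hst) ?_
  rw [setLIntegral_congr_fun hs hf, setLIntegral_const, ENNReal.top_mul hμs]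

lemma lintegral_torus_succ {n : ℕ} {f : (Fin (n + 1) → ℝ) → ℝ≥0∞} (hf : Measurable f) :
    ∫⁻ θ in torus (n + 1), f θ = ∫⁻ θ in torus n, ∫⁻ a in Icc (-π) π, f (Fin.cons a θ) := by
  set μ : Fin (n + 1) → Measure ℝ := fun _ ↦ volume.restrict (Icc (-π) π)
  have he := (measurePreserving_piFinSuccAbove μ 0).symm
  rw [torus, torus, volume_pi, volume_pi, Measure.restrict_pi_pi, Measure.restrict_pi_pi,
    ← he.lintegral_comp_emb (MeasurableEquiv.measurableEmbedding _)]
  refine (lintegral_prod_symm _ (hf.comp (MeasurableEquiv.measurable _)).aemeasurable).trans ?_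
  simp [MeasurableEquiv.piFinSuccAbove_symm_apply, Fin.consEquiv, μ]

noncomputable def levelCos (n : ℕ) (x : ℝ) (θ : Fin n → ℝ) : ℝ :=
  (n + 1) * x - 1 - ∑ j, (cos (θ j) + 1)

lemma gfun_cons_sub (n : ℕ) (x a : ℝ) (θ : Fin n → ℝ) :
    gfun (n + 1) (Fin.cons a θ) - x = (1 / (n + 1 : ℝ)) * (cos a - levelCos n x θ) := by
  rw [gfun, levelCos, Fin.sum_univ_succ]
  simp only [Fin.cons_zero, Fin.cons_succ]
  push_cast
  field_simp
  ring

lemma continuous_levelCos (n : ℕ) (x : ℝ) : Continuous (levelCos n x) := by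
  unfold levelCos; fun_prop

lemma volume_torus_inter_levelCos_pos (n : ℕ) {x : ℝ} (hx : x ∈ Ioo 0 2) :
    0 < volume (torus n ∩ levelCos n x ⁻¹' Ioo (-1) 1) := by
  refine Measure.measure_pos_of_nonempty_interior _ ⟨fun _ ↦ arccos (x - 1), ?_⟩
  have hx1 : x - 1 ∈ Ioo (-1) 1 := ⟨by linarith [hx.1], by linarith [hx.2]⟩
  rw [interior_inter, torus, interior_pi_set finite_univ,
    ((continuous_levelCos n x).isOpen_preimage _ isOpen_Ioo).interior_eq]
  refine ⟨fun _ _ ↦ ?_, ?_⟩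
  · rw [interior_Icc]
    exact ⟨by linarith [arccos_nonneg (x - 1), pi_pos], arccos_lt_pi.2 hx1.1⟩
  · simp only [mem_preimage, levelCos, cos_arccos hx1.1.le hx1.2.le, Finset.sum_const,
      Finset.card_univ, Fintype.card_fin, nsmul_eq_mul]
    convert hx1 using 1
    ring

/-- For `x ∈ (0,2)` the integral `∫_T (g(θ) - x)⁻² dθ` diverges. -/
theorem divergence_inside_spectrum (d : ℕ) (hd : 1 ≤ d) (x : ℝ) (hx : x ∈ Set.Ioo (0 : ℝ) 2) :
    ∫⁻ θ in torus d, ENNReal.ofReal (((gfun d θ - x)⁻¹) ^ 2) = ⊤ := by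
  obtain ⟨n, rfl⟩ : ∃ n, d = n + 1 := ⟨d - 1, by omega⟩
  have hmeas : Measurable fun θ ↦ ENNReal.ofReal (((gfun (n + 1) θ - x)⁻¹) ^ 2) := by
    unfold gfun; fun_prop
  rw [lintegral_torus_succ hmeas]
  refine setLIntegral_eq_top_of_subset ?_ inter_subset_left
    (volume_torus_inter_levelCos_pos n hx).ne' fun θ hθ ↦ ?_
  · exact (MeasurableSet.univ_pi fun _ ↦ measurableSet_Icc).inter
      ((continuous_levelCos n x).measurable measurableSet_Ioo)
  simp_rw [gfun_cons_sub, mul_inv, mul_pow, ENNReal.ofReal_mul (sq_nonneg _)]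
  rw [lintegral_const_mul' _ _ ENNReal.ofReal_ne_top, lintegral_inv_cos_sub_sq_eq_top hθ.2,
    ENNReal.mul_top (by positivity)]
end

section
/- Let H_v Φ = Ψ(g(θ))Φ + v(Ω,Φ)Ω on L²(T) with v ≠ 0. Then E ∈ ℝ is an eigenvalue of H_v if and only if ∫_T 1/(E - Ψ(g(θ)))² dθ < ∞, ∫_T 1/(E - Ψ(g(θ))) dθ ≠ 0, and v = (2π)^d (∫_T 1/(E - Ψ(g(θ))) dθ)^{-1}. -/
open MeasureTheory Real Filter Set Topology

/-- `E` is an eigenvalue of `H_v = Ψ(g(θ))· + v (Ω, ·) Ω` on `L²(T)`,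
where `Ω = (2π)^{-d/2} 𝟙`. -/
def IsEigen (d : ℕ) (Ψ : ℝ → ℝ) (v E : ℝ) : Prop :=
  ∃ Φ : (Fin d → ℝ) → ℝ,
    MemLp Φ 2 (volume.restrict (torus d)) ∧
    ¬ Φ =ᵐ[volume.restrict (torus d)] (fun _ => (0 : ℝ)) ∧
    (fun θ => Ψ (gfun d θ) * Φ θ +
        v * (∫ x in torus d, (2 * π) ^ (-(d : ℝ) / 2) * Φ x) * (2 * π) ^ (-(d : ℝ) / 2))
      =ᵐ[volume.restrict (torus d)] (fun θ => E * Φ θ)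

/-!
Off the set `{Ψ ∘ g = E}` the eigenvalue equation `(E - Ψ ∘ g) Φ = v (Ω, Φ) Ω` forces
`Φ = c (E - Ψ ∘ g)⁻¹` for the constant `c = v (Ω, Φ) (2π)^{-d/2}`, nonzero because `Φ ≠ 0`.
So `Φ ∈ L²` exactly when `(E - Ψ ∘ g)⁻²` is integrable, and pairing with `Ω` turns the definition
of `c` into the self-consistency condition `v (2π)^{-d} ∫ (E - Ψ ∘ g)⁻¹ = 1`; conversely,
under these conditions `(E - Ψ ∘ g)⁻¹` is an eigenvector.
That set is null: `Ψ` is injective on `(0, ∞)` since `Ψ' > 0`, and each level set of `g` is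
null by Fubini, the level sets of `cos` being countable.
-/

theorem Real.volume_setOf_cos_eq (a : ℝ) : volume {x : ℝ | cos x = a} = 0 := by
  rcases le_or_gt |a| 1 with ha | ha
  · have hsub : {x : ℝ | cos x = a} ⊆
        ⋃ k : ℤ, ({2 * k * π + arccos a, 2 * k * π - arccos a} : Set ℝ) := by
      intro x hx
      have hcos : cos (arccos a) = cos x := by
        rw [cos_arccos (abs_le.1 ha).1 (abs_le.1 ha).2, hx]
      obtain ⟨k, hk | hk⟩ := cos_eq_cos_iff.1 hcos <;> exact mem_iUnion.2 ⟨k, by simp [hk]⟩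
    exact measure_mono_null hsub (measure_iUnion_null fun k => (toFinite _).measure_zero _)
  · convert measure_empty (μ := volume)
    exact eq_empty_of_forall_notMem fun x hx => (abs_cos_le_one x).not_gt (hx ▸ ha)

/-- Fubini in the first coordinate: each slice is a level set of `f`. -/
theorem volume_setOf_sum_eq {f : ℝ → ℝ} (hf : Measurable f)
    (hnull : ∀ a, volume {x | f x = a} = 0) (n : ℕ) (s : ℝ) :
    volume {θ : Fin (n + 1) → ℝ | ∑ j, f (θ j) = s} = 0 := by
  set B : Set (ℝ × (Fin n → ℝ)) := {p | f p.1 + ∑ j, f (p.2 j) = s}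
  have hB : MeasurableSet B := measurableSet_eq_fun (by fun_prop) measurable_const
  have hpre : MeasurableEquiv.piFinSuccAbove (fun _ => ℝ) 0 ⁻¹' B =
      {θ : Fin (n + 1) → ℝ | ∑ j, f (θ j) = s} := by
    ext θ
    simp [B, Fin.sum_univ_succ, Fin.tail]
  rw [← hpre, volume_pi, ((measurePreserving_piFinSuccAbove (fun _ => volume) 0).measure_preimage
    hB.nullMeasurableSet), Measure.prod_apply_symm hB]
  refine (lintegral_congr fun y => ?_).trans lintegral_zero
  convert hnull (s - ∑ j, f (y j)) using 2
  ext x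
  simp [B, eq_sub_iff_add_eq]

theorem continuous_gfun (d : ℕ) : Continuous (gfun d) := by
  unfold gfun; fun_prop

theorem gfun_nonneg (d : ℕ) (θ : Fin d → ℝ) : 0 ≤ gfun d θ :=
  mul_nonneg (by positivity) (Finset.sum_nonneg fun j _ => by linarith [neg_one_le_cos (θ j)])

theorem volume_setOf_gfun_eq (n : ℕ) (t : ℝ) :
    volume {θ : Fin (n + 1) → ℝ | gfun (n + 1) θ = t} = 0 := by
  have hn : ((n + 1 : ℕ) : ℝ) ≠ 0 := by positivity
  convert volume_setOf_sum_eq (f := fun x => cos x + 1) (by fun_prop)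
    (fun a => by simpa [← eq_sub_iff_add_eq] using volume_setOf_cos_eq (a - 1)) n
    ((n + 1 : ℕ) * t) using 2
  ext θ
  change gfun (n + 1) θ = t ↔ ∑ j, (cos (θ j) + 1) = ((n + 1 : ℕ) : ℝ) * t
  rw [gfun, one_div_mul_eq_div, div_eq_iff hn, mul_comm]

theorem measure_setOf_comp_eq_of_injOn {α : Type*} [MeasurableSpace α] {μ : Measure α}
    {g : α → ℝ} (hg : ∀ x, 0 ≤ g x) (hnull : ∀ t, μ {x | g x = t} = 0)
    {Ψ : ℝ → ℝ} (hΨ : InjOn Ψ (Ioi 0)) (E : ℝ) : μ {x | Ψ (g x) = E} = 0 := by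
  have hsub : (Ioi 0 ∩ Ψ ⁻¹' {E}).Subsingleton :=
    fun a ha b hb => hΨ ha.1 hb.1 (ha.2.trans hb.2.symm)
  have hcount : (insert 0 (Ioi 0 ∩ Ψ ⁻¹' {E})).Countable := (hsub.finite.insert 0).countable
  refine measure_mono_null (fun x hx => ?_)
    ((measure_biUnion_null_iff hcount).2 fun t _ => hnull t)
  rcases (hg x).eq_or_lt with h0 | hpos
  · exact mem_biUnion (mem_insert 0 _) h0.symm
  · exact mem_biUnion (mem_insert_of_mem 0 ⟨hpos, hx⟩) rfl

theorem aemeasurable_comp_of_continuousOn {α β γ : Type*} [MeasurableSpace α]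
    [TopologicalSpace β] [MeasurableSpace β] [OpensMeasurableSpace β]
    [TopologicalSpace γ] [MeasurableSpace γ] [BorelSpace γ] [Nonempty γ] {μ : Measure α}
    {Ψ : β → γ} {s : Set β} (hΨ : ContinuousOn Ψ s) (hs : MeasurableSet s) {g : α → β}
    (hg : Measurable g) (hgs : ∀ᵐ x ∂μ, g x ∈ s) : AEMeasurable (fun x => Ψ (g x)) μ := by
  classical
  refine ⟨s.piecewise Ψ (fun _ => Classical.arbitrary γ) ∘ g,
    (hΨ.measurable_piecewise continuousOn_const hs).comp hg, ?_⟩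
  filter_upwards [hgs] with x hx using (piecewise_eq_of_mem _ _ _ hx).symm

section RankOnePerturbation

variable {α : Type*} [MeasurableSpace α] {μ : Measure α} {m Φ : α → ℝ} {v k E c : ℝ}

theorem ae_eq_const_mul_inv_sub_of_ae_mul_add_eq (hE : ∀ᵐ x ∂μ, m x ≠ E)
    (h : ∀ᵐ x ∂μ, m x * Φ x + c = E * Φ x) : Φ =ᵐ[μ] fun x => c * (E - m x)⁻¹ := by
  filter_upwards [h, hE] with x hx hmx
  rw [eq_mul_inv_iff_mul_eq₀ (sub_ne_zero.2 hmx.symm)]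
  linarith

theorem integrable_inv_sub_sq_and_mul_integral_eq_one_of_eigenvector (hE : ∀ᵐ x ∂μ, m x ≠ E)
    (hΦ : MemLp Φ 2 μ) (hΦ0 : ¬ Φ =ᵐ[μ] fun _ => 0)
    (heq : (fun x => m x * Φ x + v * (∫ y, k * Φ y ∂μ) * k) =ᵐ[μ] fun x => E * Φ x) :
    Integrable (fun x => ((E - m x)⁻¹) ^ 2) μ ∧ v * k ^ 2 * ∫ x, (E - m x)⁻¹ ∂μ = 1 := by
  set c := v * (∫ y, k * Φ y ∂μ) * k with hc_def
  have hΦc := ae_eq_const_mul_inv_sub_of_ae_mul_add_eq hE heq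
  have hc : c ≠ 0 := fun h0 => hΦ0 (hΦc.trans (by simp [h0]))
  refine ⟨?_, ?_⟩
  · have hsq := (memLp_two_iff_integrable_sq hΦ.aestronglyMeasurable).1 hΦ
    refine (hsq.const_mul (c ^ 2)⁻¹).congr ?_
    filter_upwards [hΦc] with x hx
    rw [hx]; field_simp
  · have hc_eq : c = c * (v * k ^ 2 * ∫ x, (E - m x)⁻¹ ∂μ) := by
      conv_lhs => rw [hc_def, integral_const_mul, integral_congr_ae hΦc, integral_const_mul]
      ring
    exact (mul_right_eq_self₀.1 hc_eq.symm).resolve_right hc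

theorem exists_eigenvector_of_integrable_inv_sub_sq (hE : ∀ᵐ x ∂μ, m x ≠ E)
    (hm : AEMeasurable m μ) (hint : Integrable (fun x => ((E - m x)⁻¹) ^ 2) μ)
    (hv : v * k ^ 2 * ∫ x, (E - m x)⁻¹ ∂μ = 1) :
    ∃ Φ : α → ℝ, MemLp Φ 2 μ ∧ ¬ Φ =ᵐ[μ] (fun _ => 0) ∧
      (fun x => m x * Φ x + v * (∫ y, k * Φ y ∂μ) * k) =ᵐ[μ] fun x => E * Φ x := by
  refine ⟨fun x => (E - m x)⁻¹, ?_, fun h0 => ?_, ?_⟩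
  · exact (memLp_two_iff_integrable_sq (aemeasurable_const.sub hm).inv.aestronglyMeasurable).2 hint
  · simp [integral_congr_ae h0] at hv
  · have hc : v * (∫ y, k * (E - m y)⁻¹ ∂μ) * k = 1 := by
      rw [integral_const_mul, ← hv]; ring
    filter_upwards [hE] with x hmx
    rw [hc]
    field_simp [sub_ne_zero.2 hmx.symm]
    ring

theorem exists_eigenvector_mul_add_rankOne_iff (hE : ∀ᵐ x ∂μ, m x ≠ E) (hm : AEMeasurable m μ) :
    (∃ Φ : α → ℝ, MemLp Φ 2 μ ∧ ¬ Φ =ᵐ[μ] (fun _ => 0) ∧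
      (fun x => m x * Φ x + v * (∫ y, k * Φ y ∂μ) * k) =ᵐ[μ] fun x => E * Φ x) ↔
    Integrable (fun x => ((E - m x)⁻¹) ^ 2) μ ∧ v * k ^ 2 * ∫ x, (E - m x)⁻¹ ∂μ = 1 :=
  ⟨fun ⟨_, hΦ, hΦ0, heq⟩ =>
    integrable_inv_sub_sq_and_mul_integral_eq_one_of_eigenvector hE hΦ hΦ0 heq,
    fun ⟨hint, hv⟩ => exists_eigenvector_of_integrable_inv_sub_sq hE hm hint hv⟩

end RankOnePerturbation

theorem mul_inv_mul_eq_one_iff_ne_zero_and_eq {K : Type*} [Field K] {a v J : K} (ha : a ≠ 0) :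
    v * a⁻¹ * J = 1 ↔ J ≠ 0 ∧ v = a * J⁻¹ := by
  refine ⟨fun h => ?_, fun ⟨hJ, hv⟩ => by rw [hv]; field_simp⟩
  have hJ : J ≠ 0 := by rintro rfl; simp at h
  exact ⟨hJ, by field_simp at h ⊢; exact h⟩

theorem two_pi_rpow_neg_half_sq (d : ℕ) : ((2 * π) ^ (-(d : ℝ) / 2)) ^ 2 = ((2 * π) ^ d)⁻¹ := by
  rw [← rpow_mul_natCast (by positivity), ← rpow_natCast, ← rpow_neg (by positivity)]
  ring_nf

theorem eigenvalue_criterion_general (d : ℕ) (hd : 1 ≤ d) (Ψ : ℝ → ℝ)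
    (hΨ : ContDiffOn ℝ 1 Ψ (Set.Ioi 0))
    (hΨ' : ∀ x ∈ Set.Ioi (0 : ℝ), 0 < derivWithin Ψ (Set.Ioi 0) x)
    (v : ℝ) (E : ℝ) :
    IsEigen d Ψ v E ↔
      (IntegrableOn (fun θ => ((E - Ψ (gfun d θ))⁻¹) ^ 2) (torus d) ∧
       (∫ θ in torus d, (E - Ψ (gfun d θ))⁻¹) ≠ 0 ∧
       v = (2 * π) ^ d * (∫ θ in torus d, (E - Ψ (gfun d θ))⁻¹)⁻¹) := by
  obtain ⟨n, rfl⟩ := Nat.exists_eq_add_of_le' hd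
  have hmono : StrictMonoOn Ψ (Ioi 0) :=
    strictMonoOn_of_deriv_pos (convex_Ioi 0) hΨ.continuousOn fun x hx => by
      rw [interior_Ioi] at hx
      simpa [derivWithin_of_isOpen isOpen_Ioi hx] using hΨ' x hx
  have hE : ∀ᵐ θ ∂volume.restrict (torus (n + 1)), Ψ (gfun (n + 1) θ) ≠ E :=
    ae_restrict_of_ae <| measure_eq_zero_iff_ae_notMem.1 <|
      measure_setOf_comp_eq_of_injOn (gfun_nonneg _) (volume_setOf_gfun_eq n) hmono.injOn E
  have hpos : ∀ᵐ θ ∂volume.restrict (torus (n + 1)), gfun (n + 1) θ ∈ Ioi 0 := by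
    refine ae_restrict_of_ae ?_
    filter_upwards [measure_eq_zero_iff_ae_notMem.1 (volume_setOf_gfun_eq n 0)] with θ hθ
    exact (gfun_nonneg _ θ).lt_of_ne' hθ
  have hm := aemeasurable_comp_of_continuousOn hΨ.continuousOn measurableSet_Ioi
    (continuous_gfun _).measurable hpos
  rw [IsEigen, exists_eigenvector_mul_add_rankOne_iff hE hm, two_pi_rpow_neg_half_sq,
    mul_inv_mul_eq_one_iff_ne_zero_and_eq (by positivity)]
  rfl

/-- Eigenvalue criterion: `E` is an eigenvalue of `H_v` iff `∫_T (E - Ψ∘g)⁻² dθ < ∞`,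
`∫_T (E - Ψ∘g)⁻¹ dθ ≠ 0` and `v = (2π)^d (∫_T (E - Ψ∘g)⁻¹ dθ)⁻¹`. -/
theorem eigenvalue_criterion (d : ℕ) (hd : 1 ≤ d) (Ψ : ℝ → ℝ)
    (hΨ : ContDiffOn ℝ 1 Ψ (Set.Ioi 0))
    (hΨ' : ∀ x ∈ Set.Ioi (0 : ℝ), 0 < derivWithin Ψ (Set.Ioi 0) x)
    (v : ℝ) (hv : v ≠ 0) (E : ℝ) :
    IsEigen d Ψ v E ↔
      (IntegrableOn (fun θ => ((E - Ψ (gfun d θ))⁻¹) ^ 2) (torus d) ∧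
       (∫ θ in torus d, (E - Ψ (gfun d θ))⁻¹) ≠ 0 ∧
       v = (2 * π) ^ d * (∫ θ in torus d, (E - Ψ (gfun d θ))⁻¹)⁻¹) :=
  eigenvalue_criterion_general d hd Ψ hΨ hΨ' v E
end
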